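/- arXiv:2103.02736 — 2 statements merged into one kernel-verified Lean document; each statement's English description precedes it below -/
import Mathlib

section
/- If f_i: ℝ_{≥0}^N → ℝ are quasi-positive (f_i(u)=... ≥ 0 whenever u ≥ 0 and u_i = 0), continuously differentiable, satisfy the total mass dissipation condition ∑_i f_i(u) ≤ 0 for all u ≥ 0, and satisfy ∂f_i/∂u_i(u) ≥ -C(1+|u|) for all u ≥ 0 and all i, then there is a constant C' such that ∑_i f_i(u) log u_i ≤ C'(1+|u|²) for all u with strictly positive entries. -/
/-!
Quasi-positivity and the lower bound on `∂f_i/∂u_i` give, by the mean value theorem along the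
`i`-th axis from the face `u_i = 0`, the linear lower bound `f_i(u) ≥ -K u_i` with
`K = C (1 + |u|)`. Put `M = 1 + |u|`. Mass dissipation lets one replace `log u_i` by
`log (u_i / M) ≤ 0`, since `log M · ∑ f_i ≤ 0`; then each term is at most
`K u_i log (M / u_i) ≤ K M`, and `N K M` is quadratic in `|u|`.
-/

open Real Set

theorem mul_le_image_add_smul_sub_of_le_fderiv {E : Type*} [NormedAddCommGroup E]
    [NormedSpace ℝ E] {g : E → ℝ} (hg : Differentiable ℝ g) (v e : E) {s K : ℝ} (hs : 0 ≤ s)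
    (hK : ∀ t ∈ Ioo 0 s, K ≤ fderiv ℝ g (v + t • e) e) :
    K * s ≤ g (v + s • e) - g v := by
  have hline : ∀ t : ℝ, HasDerivAt (fun t : ℝ => g (v + t • e)) (fderiv ℝ g (v + t • e) e) t :=
    fun t => (hg _).hasFDerivAt.comp_hasDerivAt t (((hasDerivAt_id t).smul_const e).const_add v
      |>.congr_deriv (one_smul ℝ e))
  have hdiff : Differentiable ℝ fun t : ℝ => g (v + t • e) := fun t => (hline t).differentiableAt
  simpa using (convex_Icc 0 s).mul_sub_le_image_sub_of_le_deriv hdiff.continuous.continuousOn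
    hdiff.differentiableOn (fun t ht => by
      rw [interior_Icc] at ht
      exact (hline t).deriv ▸ hK t ht)
    0 (left_mem_Icc.2 hs) s (right_mem_Icc.2 hs) hs

namespace EuclideanSpace

variable {ι : Type*} [Fintype ι]

theorem norm_le_norm_of_abs_apply_le {v u : EuclideanSpace ℝ ι} (h : ∀ j, |v j| ≤ |u j|) :
    ‖v‖ ≤ ‖u‖ := by
  rw [← pow_le_pow_iff_left₀ (norm_nonneg v) (norm_nonneg u) two_ne_zero, real_norm_sq_eq,
    real_norm_sq_eq]
  exact Finset.sum_le_sum fun j _ => sq_le_sq.2 (h j)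

variable [DecidableEq ι]

theorem neg_mul_apply_le_of_quasipositive {g : EuclideanSpace ℝ ι → ℝ} (hg : Differentiable ℝ g)
    {C : ℝ} (hC : 0 ≤ C) {i : ι}
    (hqp : ∀ w : EuclideanSpace ℝ ι, (∀ j, 0 ≤ w j) → w i = 0 → 0 ≤ g w)
    (hder : ∀ w : EuclideanSpace ℝ ι, (∀ j, 0 ≤ w j) →
      -C * (1 + ‖w‖) ≤ fderiv ℝ g w (single i 1))
    {u : EuclideanSpace ℝ ι} (hu : ∀ j, 0 ≤ u j) :
    -(C * (1 + ‖u‖)) * u i ≤ g u := by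
  set v := u - u i • single i (1 : ℝ)
  have hline : ∀ t j, (v + t • single i (1 : ℝ)) j = if j = i then t else u j := by
    intro t j
    by_cases hj : j = i
    · subst hj; simp [v]
    · simp [v, hj]
  have hline_nonneg : ∀ t : ℝ, 0 ≤ t → ∀ j, 0 ≤ (v + t • single i (1 : ℝ)) j := by
    intro t ht j
    rw [hline]
    split_ifs
    exacts [ht, hu j]
  have hend : v + u i • single i (1 : ℝ) = u := by simp [v]
  have hv : 0 ≤ g v := by
    simpa using hqp (v + (0 : ℝ) • single i 1) (hline_nonneg 0 le_rfl) (by simp [v])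
  have hslope : ∀ t ∈ Ioo 0 (u i),
      -(C * (1 + ‖u‖)) ≤ fderiv ℝ g (v + t • single i 1) (single i 1) := by
    intro t ht
    have hnorm : ‖v + t • single i (1 : ℝ)‖ ≤ ‖u‖ := by
      refine norm_le_norm_of_abs_apply_le fun j => ?_
      rw [hline]
      split_ifs with hj
      · subst hj
        rw [abs_of_pos ht.1, abs_of_nonneg (hu _)]
        exact ht.2.le
      · rfl
    have := hder _ (hline_nonneg t ht.1.le)
    nlinarith
  have := mul_le_image_add_smul_sub_of_le_fderiv hg v (single i 1) (hu i) hslope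
  rw [hend] at this
  linarith

end EuclideanSpace

theorem mul_log_div_le_of_neg_mul_le {a x K M : ℝ} (hK : 0 ≤ K) (hx : 0 < x) (hxM : x ≤ M)
    (ha : -K * x ≤ a) : a * log (x / M) ≤ K * M := by
  have hM : 0 < M := hx.trans_le hxM
  have hlog : log (x / M) ≤ 0 := log_nonpos (div_nonneg hx.le hM.le) ((div_le_one hM).2 hxM)
  have hentropy : x * log (M / x) ≤ M - x := by
    have := mul_le_mul_of_nonneg_left (log_le_sub_one_of_pos (div_pos hM hx)) hx.le
    rwa [mul_sub, mul_div_cancel₀ _ hx.ne', mul_one] at this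
  calc a * log (x / M) ≤ -K * x * log (x / M) := mul_le_mul_of_nonpos_right ha hlog
    _ = K * (x * log (M / x)) := by
      rw [log_div hx.ne' hM.ne', log_div hM.ne' hx.ne']; ring
    _ ≤ K * M := mul_le_mul_of_nonneg_left (by linarith) hK

theorem sum_mul_log_le_of_sum_nonpos {ι : Type*} [Fintype ι] {a x : ι → ℝ} {K M : ℝ}
    (hK : 0 ≤ K) (hM : 1 ≤ M) (hx : ∀ i, 0 < x i) (hxM : ∀ i, x i ≤ M)
    (ha : ∀ i, -K * x i ≤ a i) (hsum : ∑ i, a i ≤ 0) :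
    ∑ i, a i * log (x i) ≤ Fintype.card ι * (K * M) := by
  have hsplit : ∑ i, a i * log (x i) = ∑ i, a i * log (x i / M) + log M * ∑ i, a i := by
    rw [Finset.mul_sum, ← Finset.sum_add_distrib]
    refine Finset.sum_congr rfl fun i _ => ?_
    rw [log_div (hx i).ne' (by linarith)]
    ring
  have hterm : ∑ i, a i * log (x i / M) ≤ ∑ _i : ι, K * M :=
    Finset.sum_le_sum fun i _ => mul_log_div_le_of_neg_mul_le hK (hx i) (hxM i) (ha i)
  have hmass : log M * ∑ i, a i ≤ 0 := mul_nonpos_of_nonneg_of_nonpos (log_nonneg hM) hsum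
  rw [hsplit]
  simpa using add_le_add hterm hmass

theorem stmt0 (N : ℕ) (f : Fin N → EuclideanSpace ℝ (Fin N) → ℝ) (C : ℝ) (hC : 0 < C)
    (hreg : ∀ i, ContDiff ℝ 1 (f i))
    (hqp : ∀ i, ∀ u : EuclideanSpace ℝ (Fin N), (∀ j, 0 ≤ u j) → u i = 0 → 0 ≤ f i u)
    (hmd : ∀ u : EuclideanSpace ℝ (Fin N), (∀ j, 0 ≤ u j) → ∑ i, f i u ≤ 0)
    (hder : ∀ i, ∀ u : EuclideanSpace ℝ (Fin N), (∀ j, 0 ≤ u j) →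
      -C * (1 + ‖u‖) ≤ fderiv ℝ (f i) u (EuclideanSpace.single i 1)) :
    ∃ C' : ℝ, 0 < C' ∧ ∀ u : EuclideanSpace ℝ (Fin N), (∀ j, 0 < u j) →
      ∑ i, f i u * Real.log (u i) ≤ C' * (1 + ‖u‖ ^ 2) := by
  refine ⟨2 * N * C + 1, by positivity, fun u hu => ?_⟩
  have hu' : ∀ j, 0 ≤ u j := fun j => (hu j).le
  have hle : ∀ i, u i ≤ 1 + ‖u‖ := fun i => by
    have := (le_abs_self (u i)).trans (PiLp.norm_apply_le u i)
    linarith [norm_nonneg u]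
  have hbound := sum_mul_log_le_of_sum_nonpos (by positivity) (by linarith [norm_nonneg u]) hu hle
    (fun i => EuclideanSpace.neg_mul_apply_le_of_quasipositive
      ((hreg i).differentiable one_ne_zero) hC.le (hqp i) (hder i) hu') (hmd u hu')
  rw [Fintype.card_fin] at hbound
  refine hbound.trans ?_
  -- `(1 + ‖u‖) ^ 2 ≤ 2 * (1 + ‖u‖ ^ 2)`
  nlinarith [norm_nonneg u, sq_nonneg (1 - ‖u‖), mul_nonneg (mul_nonneg (Nat.cast_nonneg N) hC.le)
    (sq_nonneg (1 - ‖u‖))]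
end

section
/- Let a_{11}, a_{12}, a_{21}, a_{22} ≥ 0. The inequality {(a_{12}+a_{21})² − 16(a_{12}a_{21} + 4 a_{11}a_{22})} X ≥ 32 (a_{11}a_{21} X² + a_{22}a_{12}) holds for all X > 0 (after dividing by u_1 u_2, with X = u_1/u_2) if and only if a_{11}a_{21} = a_{22}a_{12} = 0 and (a_{12}+a_{21})² ≥ 16(a_{12}a_{21} + 4 a_{11}a_{22}). -/
section QuadraticBelowLinear

variable {p q c : ℝ}

/-- For large `x` the quadratic term wins. -/
lemma sq_coeff_eq_zero_of_forall_pos_mul_sq_add_le (hp : 0 ≤ p) (hq : 0 ≤ q)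
    (h : ∀ x : ℝ, 0 < x → p * x ^ 2 + q ≤ c * x) : p = 0 := by
  by_contra hp0
  have hp' : 0 < p := lt_of_le_of_ne hp (Ne.symm hp0)
  set x := (|c| + 1) / p
  have hx : 0 < x := by positivity
  have hpx : p * x = |c| + 1 := mul_div_cancel₀ _ hp0
  have := h x hx
  nlinarith [le_abs_self c]

/-- For small `x` the constant term wins. -/
lemma const_eq_zero_of_forall_pos_mul_sq_add_le (hp : 0 ≤ p) (hq : 0 ≤ q)
    (h : ∀ x : ℝ, 0 < x → p * x ^ 2 + q ≤ c * x) : q = 0 := by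
  by_contra hq0
  have hq' : 0 < q := lt_of_le_of_ne hq (Ne.symm hq0)
  set x := q / (|c| + 1)
  have hx : 0 < x := by positivity
  have hcx : (|c| + 1) * x = q := mul_div_cancel₀ _ (by positivity)
  have := h x hx
  nlinarith [le_abs_self c, mul_nonneg hp (sq_nonneg x)]

theorem forall_pos_mul_sq_add_le_iff (hp : 0 ≤ p) (hq : 0 ≤ q) :
    (∀ x : ℝ, 0 < x → p * x ^ 2 + q ≤ c * x) ↔ p = 0 ∧ q = 0 ∧ 0 ≤ c := by
  constructor
  · intro h
    have hp0 := sq_coeff_eq_zero_of_forall_pos_mul_sq_add_le hp hq h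
    have hq0 := const_eq_zero_of_forall_pos_mul_sq_add_le hp hq h
    refine ⟨hp0, hq0, ?_⟩
    simpa [hp0, hq0] using h 1 one_pos
  · rintro ⟨rfl, rfl, hc⟩ x hx
    simpa using mul_nonneg hc hx.le

end QuadraticBelowLinear

theorem stmt4 (a11 a12 a21 a22 : ℝ) (h11 : 0 ≤ a11) (h12 : 0 ≤ a12) (h21 : 0 ≤ a21)
    (h22 : 0 ≤ a22) :
    (∀ X : ℝ, 0 < X →
        ((a12 + a21) ^ 2 - 16 * (a12 * a21 + 4 * a11 * a22)) * X ≥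
          32 * (a11 * a21 * X ^ 2 + a22 * a12)) ↔
      (a11 * a21 = 0 ∧ a22 * a12 = 0 ∧
        (a12 + a21) ^ 2 ≥ 16 * (a12 * a21 + 4 * a11 * a22)) := by
  have hexpand : ∀ X : ℝ, 32 * (a11 * a21 * X ^ 2 + a22 * a12) =
      32 * (a11 * a21) * X ^ 2 + 32 * (a22 * a12) := fun X => by ring
  simp only [ge_iff_le, hexpand]
  rw [forall_pos_mul_sq_add_le_iff (by positivity) (by positivity)]
  simp only [mul_eq_zero (a := (32 : ℝ)), OfNat.ofNat_ne_zero, false_or, sub_nonneg]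
end
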